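/- For any trees τ ∈ 𝒩 and τ̄ ∈ 𝒩̊ with C₊(τ, τ̄) ≠ 0, the coefficient map satisfies Υ(τ̄) = (-1)^{(m(τ)-1)/2} · Υ(C₊(τ, τ̄)), where Υ is extended multiplicatively over forests and Υ(I(σ)) := Υ(σ), Υ(I⁺_i(σ)) := Υ(σ). -/

import Mathlib

/-- Trees built from generators `𝟏`, `X i`, `Ξ` by the ternary product
`τ₁,τ₂,τ₃ ↦ I(τ₁)I(τ₂)I(τ₃)`. -/
inductive T (d : ℕ) : Type
  | one : T d
  | X : Fin d → T d
  | Xi : T d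
  | prod : T d → T d → T d → T d
deriving DecidableEq

namespace T

variable {d : ℕ}

/-- The order of a tree, with parameter `δ`. -/
noncomputable def order (δ : ℝ) : T d → ℝ
  | one => -2
  | X _ => -1
  | Xi => -3 + δ
  | prod a b c => 6 + order δ a + order δ b + order δ c

/-- Number of `𝟏`-leaves. -/
def mOne : T d → ℕ
  | one => 1
  | X _ => 0
  | Xi => 0
  | prod a b c => mOne a + mOne b + mOne c

/-- Total number of `X i`-leaves. -/
def mX : T d → ℕ
  | one => 0
  | X _ => 1
  | Xi => 0
  | prod a b c => mX a + mX b + mX c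

/-- Number of noise leaves `Ξ`. -/
def mXi : T d → ℕ
  | one => 0
  | X _ => 0
  | Xi => 1
  | prod a b c => mXi a + mXi b + mXi c

end T

namespace T
/-- Whether a tree is a ternary product (i.e. not a generator). -/
def isProd {d : ℕ} : T d → Bool
  | prod _ _ _ => true
  | _ => false

/-- Membership in `Ñ`: ternary-product trees of order in `(-1, 0)`. -/
def inTildeN {d : ℕ} (δ : ℝ) (τ : T d) : Prop :=
  isProd τ = true ∧ -1 < order δ τ ∧ order δ τ < 0

noncomputable instance {d : ℕ} (δ : ℝ) (τ : T d) : Decidable (inTildeN δ τ) := by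
  unfold inTildeN; infer_instance
end T

/-- Planted trees: `I(τ)` and the derivative-planted trees `I⁺ᵢ(τ)`. -/
inductive PT (d : ℕ) : Type
  | I : T d → PT d
  | Ip : Fin d → T d → PT d
deriving DecidableEq

/-- The cut map `C₊(τ̄, τ)`, returning a forest of planted trees, or `none`
(representing `0`).  This is the recursive definition of Table 1; the zero
conventions `I⁺ᵢ(X_j) = 0` for `j ≠ i`, `I⁺ᵢ(τ) = 0` for `τ ∉ Ñ` and the
projection `p₊` onto planted trees of positive order are built in. -/
noncomputable def Cplus {d : ℕ} (δ : ℝ) : T d → T d → Option (List (PT d))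
  | T.one, T.one => some [PT.I T.one]
  | T.one, T.X j => some [PT.I (T.X j)]
  | T.one, T.prod x y z =>
      if 0 < T.order δ (T.prod x y z) + 2 then some [PT.I (T.prod x y z)] else none
  | T.X i, T.X j => if i = j then some [PT.Ip i (T.X j)] else none
  | T.X i, T.prod x y z =>
      if T.inTildeN δ (T.prod x y z) then some [PT.Ip i (T.prod x y z)] else none
  | T.Xi, T.Xi => some []
  | T.prod a b c, T.prod x y z =>
      match Cplus δ a x, Cplus δ b y, Cplus δ c z with
      | some f1, some f2, some f3 => some (f1 ++ f2 ++ f3)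
      | _, _, _ => none
  | _, _ => none

namespace PT
/-- Leaf counts extended to planted trees. -/
def mOne {d : ℕ} : PT d → ℕ
  | I τ => T.mOne τ
  | Ip _ τ => T.mOne τ

def mX {d : ℕ} : PT d → ℕ
  | I τ => T.mX τ
  | Ip _ τ => T.mX τ

def mXi {d : ℕ} : PT d → ℕ
  | I τ => T.mXi τ
  | Ip _ τ => T.mXi τ
end PT

/-- Leaf counts extended to forests of planted trees, by summation. -/
def FmOne {d : ℕ} (f : List (PT d)) : ℕ := (f.map PT.mOne).sum
def FmX {d : ℕ} (f : List (PT d)) : ℕ := (f.map PT.mX).sum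
def FmXi {d : ℕ} (f : List (PT d)) : ℕ := (f.map PT.mXi).sum

namespace T
/-- Total number of leaves of a tree. -/
def m {d : ℕ} (τ : T d) : ℕ := T.mOne τ + T.mX τ + T.mXi τ
end T

/-- The coefficient map `Υ`, defined recursively from parameters `v_𝟏` and `v_X`. -/
noncomputable def Ups {d : ℕ} (v1 : ℝ) (vX : Fin d → ℝ) : T d → ℝ
  | .one => v1
  | .X i => vX i
  | .Xi => 1
  | .prod a b c => -(Ups v1 vX a * Ups v1 vX b * Ups v1 vX c)

/-- `Υ` extended to planted trees: `Υ(I(σ)) = Υ(σ)` and `Υ(I⁺ᵢ(σ)) = Υ(σ)`. -/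
noncomputable def UpsP {d : ℕ} (v1 : ℝ) (vX : Fin d → ℝ) : PT d → ℝ
  | .I τ => Ups v1 vX τ
  | .Ip _ τ => Ups v1 vX τ

/-- `Υ` extended multiplicatively to forests of planted trees. -/
noncomputable def UpsF {d : ℕ} (v1 : ℝ) (vX : Fin d → ℝ) (f : List (PT d)) : ℝ :=
  (f.map (UpsP v1 vX)).prod

/-! Induction along the recursion of `C₊`. At a generator `τ`, `C₊(τ, τ̄)` is the single planted
tree over `τ̄` (or the empty forest, for `Ξ`), and `m(τ) = 1`. At a product, `Υ` contributes one
factor `-1`, which the sign absorbs: leaf counts are odd and additive, so `(m(τ) - 1)/2` of a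
product is the sum of those of its three factors plus one. -/

namespace T

variable {d : ℕ}

theorem m_prod (a b c : T d) : m (prod a b c) = m a + m b + m c := by
  simp only [m, mOne, mX, mXi]; ring

theorem odd_m : ∀ τ : T d, Odd (m τ)
  | one | X _ | Xi => odd_one
  | prod a b c => by
    rw [m_prod]
    exact ((odd_m a).add_odd (odd_m b)).add_odd (odd_m c)

theorem neg_one_pow_half_m_prod {R : Type*} [Monoid R] [HasDistribNeg R] (a b c : T d) :
    (-1 : R) ^ ((m (prod a b c) - 1) / 2) =
      -((-1) ^ ((m a - 1) / 2) * (-1) ^ ((m b - 1) / 2) * (-1) ^ ((m c - 1) / 2)) := by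
  obtain ⟨ka, hka⟩ := odd_m a
  obtain ⟨kb, hkb⟩ := odd_m b
  obtain ⟨kc, hkc⟩ := odd_m c
  have : (m (prod a b c) - 1) / 2 = (m a - 1) / 2 + (m b - 1) / 2 + (m c - 1) / 2 + 1 := by
    rw [m_prod]; omega
  rw [this, pow_succ, pow_add, pow_add, mul_neg_one]

end T

section Cplus

variable {d : ℕ} {δ : ℝ} {τbar : T d} {f : List (PT d)}

theorem Cplus_one_eq_some (h : Cplus δ .one τbar = some f) : f = [.I τbar] := by
  cases τbar <;> simp_all [Cplus, eq_comm]

theorem Cplus_X_eq_some {i : Fin d} (h : Cplus δ (.X i) τbar = some f) : f = [.Ip i τbar] := by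
  cases τbar <;> simp_all [Cplus, eq_comm]

theorem Cplus_Xi_eq_some (h : Cplus δ .Xi τbar = some f) : τbar = .Xi ∧ f = [] := by
  cases τbar <;> simp_all [Cplus]

theorem Cplus_prod_eq_some {a b c : T d} (h : Cplus δ (.prod a b c) τbar = some f) :
    ∃ x y z f₁ f₂ f₃, τbar = .prod x y z ∧ Cplus δ a x = some f₁ ∧ Cplus δ b y = some f₂ ∧
      Cplus δ c z = some f₃ ∧ f = f₁ ++ f₂ ++ f₃ := by
  cases τbar <;> simp only [Cplus, reduceCtorEq] at h
  split at h <;> simp_all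

end Cplus

theorem UpsF_append {d : ℕ} (v1 : ℝ) (vX : Fin d → ℝ) (f g : List (PT d)) :
    UpsF v1 vX (f ++ g) = UpsF v1 vX f * UpsF v1 vX g := by
  simp [UpsF]

theorem Ups_eq_of_Cplus_eq_some {d : ℕ} {δ : ℝ} (v1 : ℝ) (vX : Fin d → ℝ) :
    ∀ {τ τbar : T d} {f : List (PT d)}, Cplus δ τ τbar = some f →
      Ups v1 vX τbar = (-1 : ℝ) ^ ((T.m τ - 1) / 2) * UpsF v1 vX f
  | .one, _, _, h => by simp [Cplus_one_eq_some h, UpsF, UpsP, T.m, T.mOne, T.mX, T.mXi]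
  | .X _, _, _, h => by simp [Cplus_X_eq_some h, UpsF, UpsP, T.m, T.mOne, T.mX, T.mXi]
  | .Xi, _, _, h => by
    obtain ⟨rfl, rfl⟩ := Cplus_Xi_eq_some h
    simp [Ups, UpsF, T.m, T.mOne, T.mX, T.mXi]
  | .prod a b c, _, _, h => by
    obtain ⟨x, y, z, f₁, f₂, f₃, rfl, h₁, h₂, h₃, rfl⟩ := Cplus_prod_eq_some h
    rw [Ups, Ups_eq_of_Cplus_eq_some v1 vX h₁, Ups_eq_of_Cplus_eq_some v1 vX h₂,
      Ups_eq_of_Cplus_eq_some v1 vX h₃, T.neg_one_pow_half_m_prod, UpsF_append, UpsF_append]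
    ring

theorem Ups_coherence_general (d : ℕ) (δ : ℝ)
    (v1 : ℝ) (vX : Fin d → ℝ) (τ τbar : T d) (f : List (PT d))
    (h : Cplus δ τ τbar = some f) :
    Ups v1 vX τbar = (-1 : ℝ) ^ ((T.m τ - 1) / 2) * UpsF v1 vX f :=
  Ups_eq_of_Cplus_eq_some v1 vX h

/-- for `τ ∈ 𝒩` and `τ̄ ∈ 𝒩̊` with `C₊(τ, τ̄) ≠ 0`,
`Υ(τ̄) = (-1)^{(m(τ)-1)/2} · Υ(C₊(τ, τ̄))`. -/
theorem Ups_coherence (d : ℕ) (δ : ℝ) (hδ : 0 < δ)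
    (v1 : ℝ) (vX : Fin d → ℝ) (τ τbar : T d) (f : List (PT d))
    (hτ : -2 ≤ T.order δ τ ∧ T.order δ τ ≤ 0)
    (hτbar : T.isProd τbar = true ∧ -2 ≤ T.order δ τbar ∧ T.order δ τbar ≤ 0)
    (h : Cplus δ τ τbar = some f) :
    Ups v1 vX τbar = (-1 : ℝ) ^ ((T.m τ - 1) / 2) * UpsF v1 vX f :=
  Ups_coherence_general d δ v1 vX τ τbar f h
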